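/- Let a, b ∈ ℂ with |a|² − |b|² = 1 and let U := [[a, conj(b)], [b, conj(a)]] (an indefinite-unitary matrix preserving the Hermitian form diag(1,−1)), and let θ ∈ ℝ. Then the (2,1) entry of the first Reichardt iterate U₁ has modulus |b| · |1 − (2 − 2cos θ)(1 + |b|²)|. In particular, if cos θ = (2|b|² + 1)/(2(|b|² + 1)), then U₁ is a diagonal matrix. -/

import Mathlib

open Complex Matrix

/-- The z-rotation `D(θ) = diag(e^{iθ/2}, e^{-iθ/2})`. -/
noncomputable def Dmat (θ : ℝ) : Matrix (Fin 2) (Fin 2) ℂ :=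
  !![Complex.exp (Complex.I * θ / 2), 0; 0, Complex.exp (-(Complex.I * θ / 2))]

/-- The Reichardt iteration `U₀ = U`, `U_{k+1} = U_k D(θ) U_k⁻¹ D(θ) U_k D(θ)⁻²`. -/
noncomputable def reichardt (θ : ℝ) (U : Matrix (Fin 2) (Fin 2) ℂ) :
    ℕ → Matrix (Fin 2) (Fin 2) ℂ
  | 0 => U
  | k + 1 =>
      reichardt θ U k * Dmat θ * (reichardt θ U k)⁻¹ * Dmat θ * reichardt θ U k *
        (Dmat θ ^ 2)⁻¹

/-!
For `U = !![p, q; r, s]` of determinant one, `U⁻¹` is the adjugate, and a direct computation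
shows that each off-diagonal entry of `U₁` is the corresponding entry of `U`, times a phase
`e^{∓iθ}`, times the common scalar `p s (2 cos θ) - (p s + q r)`. For the indefinite-unitary `U`
we have `p s = |a|² = 1 + |b|²` and `q r = |b|²`, so this scalar is the real number
`1 - (2 - 2 cos θ)(1 + |b|²)`, which vanishes for the given value of `cos θ`.
-/

theorem Matrix.isDiag_fin_two_iff {α : Type*} [Zero α] (A : Matrix (Fin 2) (Fin 2) α) :
    A.IsDiag ↔ A 0 1 = 0 ∧ A 1 0 = 0 := by
  refine ⟨fun h => ⟨h (by decide), h (by decide)⟩, fun ⟨h01, h10⟩ i j hij => ?_⟩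
  fin_cases i <;> fin_cases j <;> simp_all

theorem Matrix.inv_fin_two_of_det_eq_one {R : Type*} [CommRing R] {p q r s : R}
    (hdet : p * s - q * r = 1) : (!![p, q; r, s])⁻¹ = !![s, -q; -r, p] := by
  rw [inv_def, det_fin_two_of, hdet, Ring.inverse_one, one_smul, adjugate_fin_two_of]

theorem Dmat_eq (θ : ℝ) :
    Dmat θ = !![exp (I * θ / 2), 0; 0, (exp (I * θ / 2))⁻¹] := by
  rw [Dmat, exp_neg]

theorem Dmat_sq_inv (θ : ℝ) :
    (Dmat θ ^ 2)⁻¹ = !![(exp (I * θ / 2))⁻¹ ^ 2, 0; 0, exp (I * θ / 2) ^ 2] := by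
  have he := exp_ne_zero (I * θ / 2)
  rw [Dmat_eq, sq, mul_fin_two, inv_fin_two_of_det_eq_one] <;> field_simp <;> simp

theorem exp_half_sq_add_inv_sq (θ : ℝ) :
    exp (I * θ / 2) ^ 2 + (exp (I * θ / 2))⁻¹ ^ 2 = 2 * Real.cos θ := by
  rw [← exp_neg, ← exp_nat_mul, ← exp_nat_mul, ofReal_cos, two_cos]
  ring_nf

theorem exp_half_sq (θ : ℝ) : exp (I * θ / 2) ^ 2 = exp (θ * I) := by
  rw [← exp_nat_mul]; ring_nf

theorem reichardt_one_apply_one_zero (θ : ℝ) {p q r s : ℂ} (hdet : p * s - q * r = 1) :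
    (reichardt θ !![p, q; r, s] 1) 1 0 =
      r * (p * s * (2 * Real.cos θ) - (p * s + q * r)) * (exp (θ * I))⁻¹ := by
  have he := exp_ne_zero (I * θ / 2)
  rw [reichardt, reichardt, Dmat_sq_inv, Dmat_eq, inv_fin_two_of_det_eq_one hdet,
    ← exp_half_sq_add_inv_sq, ← exp_half_sq]
  simp only [mul_fin_two, of_apply, cons_val', cons_val_zero, cons_val_one, cons_val_fin_one]
  field_simp
  ring

theorem reichardt_one_apply_zero_one (θ : ℝ) {p q r s : ℂ} (hdet : p * s - q * r = 1) :
    (reichardt θ !![p, q; r, s] 1) 0 1 =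
      q * (p * s * (2 * Real.cos θ) - (p * s + q * r)) * exp (θ * I) := by
  have he := exp_ne_zero (I * θ / 2)
  rw [reichardt, reichardt, Dmat_sq_inv, Dmat_eq, inv_fin_two_of_det_eq_one hdet,
    ← exp_half_sq_add_inv_sq, ← exp_half_sq]
  simp only [mul_fin_two, of_apply, cons_val', cons_val_zero, cons_val_one, cons_val_fin_one]
  field_simp
  ring

/-- For the indefinite-unitary matrix `U = [[a, conj b],[b, conj a]]` with
`|a|² − |b|² = 1`, the `(2,1)` entry of the first Reichardt iterate has modulus
`|b|·|1 − (2 − 2cos θ)(1 + |b|²)|`; in particular, if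
`cos θ = (2|b|² + 1)/(2(|b|² + 1))`, then `U₁` is diagonal. -/
theorem reichardt_one_offdiag_abs_indefinite (a b : ℂ)
    (h : ‖a‖ ^ 2 - ‖b‖ ^ 2 = 1) (θ : ℝ) :
    ‖(reichardt θ !![a, starRingEnd ℂ b; b, starRingEnd ℂ a] 1) 1 0‖ =
      ‖b‖ * |1 - (2 - 2 * Real.cos θ) * (1 + ‖b‖ ^ 2)| ∧
    (Real.cos θ = (2 * ‖b‖ ^ 2 + 1) / (2 * (‖b‖ ^ 2 + 1)) →
      (reichardt θ !![a, starRingEnd ℂ b; b, starRingEnd ℂ a] 1).IsDiag) := by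
  have hnorm : (‖a‖ : ℂ) ^ 2 - (‖b‖ : ℂ) ^ 2 = 1 := by exact_mod_cast h
  have hdet : a * starRingEnd ℂ a - starRingEnd ℂ b * b = 1 := by
    rwa [mul_conj', conj_mul']
  have hκ : a * starRingEnd ℂ a * (2 * Real.cos θ) -
      (a * starRingEnd ℂ a + starRingEnd ℂ b * b) =
        ((1 - (2 - 2 * Real.cos θ) * (1 + ‖b‖ ^ 2) : ℝ) : ℂ) := by
    rw [mul_conj', conj_mul']
    push_cast
    linear_combination (2 * cos (θ : ℂ) - 1) * hnorm
  refine ⟨?_, fun hcos => ?_⟩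
  · rw [reichardt_one_apply_one_zero θ hdet, hκ, norm_mul, norm_mul, norm_inv,
      norm_exp_ofReal_mul_I, norm_real, Real.norm_eq_abs, inv_one, mul_one]
  · have hκ0 : 1 - (2 - 2 * Real.cos θ) * (1 + ‖b‖ ^ 2) = 0 := by
      rw [hcos]; field_simp; ring
    rw [isDiag_fin_two_iff, reichardt_one_apply_zero_one θ hdet,
      reichardt_one_apply_one_zero θ hdet, hκ, hκ0]
    simp
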